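/- arXiv:0806.0585 — 3 statements merged into one kernel-verified Lean document; each statement's English description precedes it below -/
import Mathlib

section
/- For n ≥ 2, the number of monomials of the form a_{g1}^{(1)} a_{h1}^{(1)} ⋯ a_{gn}^{(n)} a_{hn}^{(n)} a_{g1+⋯+gn}^{(n+1)} a_{h1+⋯+hn}^{(n+1)} with g_i, h_i ∈ Z/2 (counted as multisets, i.e., distinct monomials in commuting variables) equals the analogous count for n−1 plus 3^n − 2^{n−1}. -/
open Finset

/-- The number of distinct degree-2 monomials
`a_{g₁}⁽¹⁾a_{h₁}⁽¹⁾⋯a_{gₙ}⁽ⁿ⁾a_{hₙ}⁽ⁿ⁾ a_{Σg}⁽ⁿ⁺¹⁾a_{Σh}⁽ⁿ⁺¹⁾`: two pairs `(g,h)` give the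
same monomial iff the unordered pairs `{gᵢ,hᵢ}` agree for every `i` and the unordered pair
of parity sums agrees. -/
def countM (n : ℕ) : ℕ :=
  ((Finset.univ : Finset ((Fin n → ZMod 2) × (Fin n → ZMod 2))).image
    (fun p => ((fun i => s(p.1 i, p.2 i) : Fin n → Sym2 (ZMod 2)),
                s(∑ i, p.1 i, ∑ i, p.2 i)))).card

/-!
Write `f i = s(gᵢ, hᵢ)`, so that the last factor is `s(Σ g, Σ h)`. Its entry sum is the total
entry sum of `f`. If every `f i` is a diagonal pair `s(xᵢ, xᵢ)`, it is forced to be `s(Σ x, Σ x)`;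
otherwise swapping the entries of an off-diagonal `f j` shifts both `Σ g` and `Σ h` by one, so both
diagonal pairs occur when the total entry sum is even. Hence
`countM n + 2ⁿ = 3ⁿ + #{f | total entry sum of f is 0}`, and the character sum
`∑_f (-1)^(total entry sum) = (∑_e (-1)^(entry sum of e))ⁿ = 1` makes the last count `(3ⁿ + 1)/2`.
Thus `2 countM n + 2ⁿ⁺¹ = 3ⁿ⁺¹ + 1`, and the recursion is the difference of two consecutive cases.
-/

def pairSum : Sym2 (ZMod 2) → ZMod 2 := Sym2.lift ⟨(· + ·), add_comm⟩

def pairProd : Sym2 (ZMod 2) → ZMod 2 := Sym2.lift ⟨(· * ·), mul_comm⟩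

@[simp] lemma pairSum_mk (a b : ZMod 2) : pairSum s(a, b) = a + b := rfl

@[simp] lemma pairProd_mk (a b : ZMod 2) : pairProd s(a, b) = a * b := rfl

lemma mk_pairProd_pairSum (e : Sym2 (ZMod 2)) : s(pairProd e, pairProd e + pairSum e) = e := by
  revert e; decide

lemma mk_add_one_add_one {a b : ZMod 2} (h : a + b = 1) : s(a + 1, b + 1) = s(a, b) := by
  revert a b; decide

lemma card_filter_pairSum_pairProd (c m : ZMod 2) (b : Prop) [Decidable b] (hb : b → c = 0) :
    #{e | pairSum e = c ∧ (b → pairProd e = m)} + (if b then 1 else 0) =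
      1 + if c = 0 then 1 else 0 := by
  by_cases h : b
  · simp only [h, hb h, true_imp_iff, if_true]
    revert m; decide
  · simp only [h, false_imp_iff, and_true, if_false]
    clear hb h
    revert c; decide

def negOnePowVal (x : ZMod 2) : ℤ := (-1) ^ x.val

lemma negOnePowVal_sum {ι : Type*} (s : Finset ι) (x : ι → ZMod 2) :
    negOnePowVal (∑ i ∈ s, x i) = ∏ i ∈ s, negOnePowVal (x i) := by
  classical
  induction s using Finset.induction_on with
  | empty => rfl
  | insert a s ha ih =>
    rw [sum_insert ha, prod_insert ha, ← ih]
    generalize x a = y, ∑ i ∈ s, x i = z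
    revert y z; decide

lemma card_filter_prod_eq_sum {α β : Type*} [Fintype α] [Fintype β] (P : α → β → Prop)
    [∀ a b, Decidable (P a b)] : #{q : α × β | P q.1 q.2} = ∑ a, #{b | P a b} := by
  simp only [card_filter, Fintype.sum_prod_type]

section

variable {ι α : Type*} [Fintype ι] [DecidableEq ι] [Fintype α]

lemma two_mul_card_filter_sum_eq_zero (φ : α → ZMod 2) :
    (2 * #{f : ι → α | ∑ i, φ (f i) = 0} : ℤ) =
      Fintype.card α ^ Fintype.card ι + (∑ a, negOnePowVal (φ a)) ^ Fintype.card ι := by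
  have hsign (y : ZMod 2) : (2 * if y = 0 then 1 else 0 : ℤ) = 1 + negOnePowVal y := by
    revert y; decide
  rw [natCast_card_filter, mul_sum, sum_congr rfl fun f _ => hsign _, sum_add_distrib]
  congr 1
  · simp
  · rw [← card_univ (α := ι), ← prod_const, Fintype.prod_sum]
    simp only [negOnePowVal_sum]

lemma card_filter_forall (p : α → Prop) [DecidablePred p] :
    #{f : ι → α | ∀ i, p (f i)} = #{a | p a} ^ Fintype.card ι := by
  rw [← card_univ (α := ι), ← prod_const, ← Fintype.card_piFinset]
  congr 1
  ext f
  simp [Fintype.mem_piFinset]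

end

section

variable {ι : Type*} [Fintype ι]

def IsMonomial (f : ι → Sym2 (ZMod 2)) (s : Sym2 (ZMod 2)) : Prop :=
  pairSum s = ∑ i, pairSum (f i) ∧
    ((∀ i, pairSum (f i) = 0) → pairProd s = ∑ i, pairProd (f i))

instance (f : ι → Sym2 (ZMod 2)) (s : Sym2 (ZMod 2)) : Decidable (IsMonomial f s) :=
  inferInstanceAs (Decidable (_ ∧ _))

lemma sum_eq_sum_add_sum_pairSum {f : ι → Sym2 (ZMod 2)} {g h : ι → ZMod 2}
    (hgh : ∀ i, s(g i, h i) = f i) :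
    ∑ i, h i = ∑ i, g i + ∑ i, pairSum (f i) := by
  simp only [← hgh, pairSum_mk, sum_add_distrib, CharTwo.add_cancel_left]

def monomial (g h : ι → ZMod 2) : (ι → Sym2 (ZMod 2)) × Sym2 (ZMod 2) :=
  (fun i => s(g i, h i), s(∑ i, g i, ∑ i, h i))

variable [DecidableEq ι]

variable (ι) in
def monomials : Finset ((ι → Sym2 (ZMod 2)) × Sym2 (ZMod 2)) :=
  univ.image fun p : (ι → ZMod 2) × (ι → ZMod 2) => monomial p.1 p.2

lemma countM_eq_card_monomials (n : ℕ) : countM n = #(monomials (Fin n)) := rfl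

lemma exists_mk_eq_and_sum_eq (f : ι → Sym2 (ZMod 2)) (c : ZMod 2)
    (hc : (∀ i, pairSum (f i) = 0) → c = ∑ i, pairProd (f i)) :
    ∃ g h : ι → ZMod 2, (∀ i, s(g i, h i) = f i) ∧ ∑ i, g i = c := by
  set g := fun i => pairProd (f i)
  set h := fun i => pairProd (f i) + pairSum (f i)
  have hgh (i : ι) : s(g i, h i) = f i := mk_pairProd_pairSum (f i)
  by_cases hg : ∑ i, g i = c
  · exact ⟨g, h, hgh, hg⟩
  -- swapping the entries at an off-diagonal coordinate changes `∑ g` by one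
  obtain ⟨j, hj⟩ : ∃ j, g j + h j = 1 := by
    by_contra! hdiag
    refine hg (hc fun i => ?_).symm
    rw [← hgh, pairSum_mk]
    exact (by decide : ∀ x : ZMod 2, x ≠ 1 → x = 0) _ (hdiag i)
  refine ⟨g + Pi.single j 1, h + Pi.single j 1, fun i => ?_, ?_⟩
  · rcases eq_or_ne i j with rfl | hij
    · simpa [mk_add_one_add_one hj] using hgh i
    · simpa [hij] using hgh i
  · simp only [Pi.add_apply, sum_add_distrib, sum_pi_single', mem_univ, if_true]
    exact (by decide : ∀ x y : ZMod 2, x ≠ y → x + 1 = y) _ _ hg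

lemma mem_monomials_iff {f : ι → Sym2 (ZMod 2)} {s : Sym2 (ZMod 2)} :
    (f, s) ∈ monomials ι ↔ IsMonomial f s := by
  simp only [IsMonomial, monomials, monomial, mem_image, mem_univ, true_and, Prod.exists,
    Prod.mk.injEq]
  constructor
  · rintro ⟨g, h, rfl, rfl⟩
    refine ⟨sum_add_distrib.symm, fun hdiag => ?_⟩
    obtain rfl : g = h := funext fun i => CharTwo.add_eq_zero.mp (hdiag i)
    exact CharTwo.sum_mul_self _ _
  · rintro ⟨hsum, hprod⟩
    obtain ⟨g, h, hgh, hg⟩ := exists_mk_eq_and_sum_eq f (pairProd s) hprod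
    refine ⟨g, h, funext hgh, ?_⟩
    rw [sum_eq_sum_add_sum_pairSum hgh, hg, ← hsum, mk_pairProd_pairSum]

lemma card_monomials_add_two_pow :
    #(monomials ι) + 2 ^ Fintype.card ι =
      3 ^ Fintype.card ι + #{f : ι → Sym2 (ZMod 2) | ∑ i, pairSum (f i) = 0} := by
  have hmon : monomials ι = ({q | IsMonomial q.1 q.2} : Finset (_ × Sym2 (ZMod 2))) := by
    ext ⟨f, s⟩
    simp [mem_monomials_iff]
  have hdiag : #{f : ι → Sym2 (ZMod 2) | ∀ i, pairSum (f i) = 0} = 2 ^ Fintype.card ι :=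
    card_filter_forall (fun e => pairSum e = 0)
  calc #(monomials ι) + 2 ^ Fintype.card ι
      = ∑ f : ι → Sym2 (ZMod 2),
          (#{s | IsMonomial f s} + if ∀ i, pairSum (f i) = 0 then 1 else 0) := by
        rw [sum_add_distrib, ← card_filter_prod_eq_sum, ← hmon, sum_boole, Nat.cast_id, hdiag]
    _ = ∑ f : ι → Sym2 (ZMod 2), (1 + if ∑ i, pairSum (f i) = 0 then 1 else 0) :=
        sum_congr rfl fun f _ =>
          card_filter_pairSum_pairProd _ _ _ fun h => sum_eq_zero fun i _ => h i
    _ = 3 ^ Fintype.card ι + #{f : ι → Sym2 (ZMod 2) | ∑ i, pairSum (f i) = 0} := by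
        rw [sum_add_distrib, sum_boole, Nat.cast_id]
        simp [Sym2.card]

lemma two_mul_card_sum_pairSum_eq_zero :
    2 * #{f : ι → Sym2 (ZMod 2) | ∑ i, pairSum (f i) = 0} = 3 ^ Fintype.card ι + 1 := by
  have h := two_mul_card_filter_sum_eq_zero (ι := ι) pairSum
  have hsign : ∑ e, negOnePowVal (pairSum e) = 1 := by decide
  rw [hsign, one_pow] at h
  exact_mod_cast h

lemma two_mul_card_monomials :
    2 * #(monomials ι) + 2 ^ (Fintype.card ι + 1) = 3 ^ (Fintype.card ι + 1) + 1 := by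
  have h := card_monomials_add_two_pow (ι := ι)
  have h' := two_mul_card_sum_pairSum_eq_zero (ι := ι)
  rw [pow_succ, pow_succ]
  omega

end

theorem stmt3_general (n : ℕ) :
    countM n = countM (n - 1) + (3 ^ n - 2 ^ (n - 1)) := by
  rcases n with _ | m
  · simp
  have hm := two_mul_card_monomials (ι := Fin m)
  have hm1 := two_mul_card_monomials (ι := Fin (m + 1))
  simp only [Fintype.card_fin, pow_succ] at hm hm1
  rw [countM_eq_card_monomials, countM_eq_card_monomials, Nat.add_sub_cancel]
  have : 1 ≤ 2 ^ m := Nat.one_le_two_pow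
  omega

/-- For `n ≥ 2`, the number of such monomials equals the analogous count for `n-1`
plus `3^n − 2^(n-1)`. -/
theorem stmt3 (n : ℕ) (hn : 2 ≤ n) :
    countM n = countM (n - 1) + (3 ^ n - 2 ^ (n - 1)) :=
  stmt3_general n
end

section
/- For every n ≥ 1 and formal variable t, the power series identity Σ_{i≥0} (i+1)^n t^i = A_n(t)/(t·(1−t)^{n+1}) holds, where A_n(t) = Σ_{σ ∈ S_n} t^{1+d(σ)} is the n-th Eulerian polynomial; equivalently (1−t)^{n+1} · Σ_{i≥0} (i+1)^n t^i = A_{n,1} + A_{n,2} t + ⋯ + A_{n,n} t^{n−1}. -/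
/-- The number of descents of a permutation of `{1,…,n}` (indices `i` with
`σ(i) > σ(i+1)`). -/
noncomputable def descents {n : ℕ} (σ : Equiv.Perm (Fin n)) : ℕ :=
  Nat.card {i : Fin n // ∃ h : (i : ℕ) + 1 < n, σ ⟨(i : ℕ) + 1, h⟩ < σ i}

/-- The Eulerian number `A_{n,k}`: the number of permutations of `{1,…,n}` with exactly
`k − 1` descents (`0` for `k = 0`, and automatically `0` for `k > n`). -/
noncomputable def eulerian (n k : ℕ) : ℕ :=
  if k = 0 then 0 else Nat.card {σ : Equiv.Perm (Fin n) // descents σ + 1 = k}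

/-! Put `E_n(t) = ∑_{σ ∈ S_n} t^{des σ}`, so that `A_n(t) = t E_n(t)`. Every permutation of
`S_{m+1}` arises exactly once by inserting the letter `m + 1` into one of the `m + 1` slots of
the one-line word of some `τ ∈ S_m`. Inserted at the end of the word or into a descent gap it
creates no new descent, anywhere else exactly one; as there are `des τ + 1` slots of the first
kind, `E_{m+1} = (1 + m t) E_m + t (1 - t) E_m'`. The series `F_n = ∑_i (i+1)^n t^i` satisfy
`F_{n+1} = F_n + t F_n'`, and differentiating `(1 - t)^{n+1} F_n = E_n` shows that
`(1 - t)^{n+2} F_{n+1}` obeys the same recurrence. The case `n = 0` is the geometric series. -/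

open Finset Function
open Equiv (Perm)

theorem Fin.insertNth_injective {n : ℕ} {α : Type*} {p : Fin (n + 1)} {x : α} {f : Fin n → α}
    (hf : Injective f) (hx : x ∉ Set.range f) : Injective (p.insertNth x f) := by
  intro i j hij
  induction i using p.succAboveCases <;> induction j using p.succAboveCases <;>
    simp only [insertNth_apply_same, insertNth_apply_succAbove] at hij
  · rfl
  · exact (hx ⟨_, hij.symm⟩).elim
  · exact (hx ⟨_, hij⟩).elim
  · rw [hf hij]

section Descents

variable {m n : ℕ}

/-- The one-line word of `σ`, padded with `0` beyond position `n` so that positions can be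
shifted freely in `ℕ`. -/
def oneLine (σ : Perm (Fin n)) (i : ℕ) : ℕ := if h : i < n then σ ⟨i, h⟩ else 0

theorem oneLine_lt (σ : Perm (Fin n)) {i : ℕ} (hi : i < n) : oneLine σ i < n := by
  simp [oneLine, hi]

def descentSet (σ : Perm (Fin n)) : Finset ℕ :=
  (range n).filter fun i => i + 1 < n ∧ oneLine σ (i + 1) < oneLine σ i

theorem mem_descentSet {σ : Perm (Fin n)} {i : ℕ} :
    i ∈ descentSet σ ↔ i + 1 < n ∧ oneLine σ (i + 1) < oneLine σ i := by
  simp only [descentSet, mem_filter, mem_range, and_iff_right_iff_imp]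
  omega

theorem card_descentSet (σ : Perm (Fin n)) : #(descentSet σ) = descents σ := by
  rw [descents, Nat.card_eq_fintype_card, Fintype.card_subtype]
  refine (card_bij (fun (i : Fin n) _ => (i : ℕ)) (fun i hi => ?_) (fun _ _ _ _ h => Fin.ext h)
    fun j hj => ?_).symm
  · obtain ⟨h, hlt⟩ := (mem_filter.mp hi).2
    simpa [mem_descentSet, oneLine, h] using hlt
  · obtain ⟨h, hlt⟩ := mem_descentSet.mp hj
    exact ⟨⟨j, by omega⟩, by simpa [oneLine, h, show j < n by omega] using hlt, rfl⟩

theorem descents_le (σ : Perm (Fin n)) : descents σ ≤ n - 1 := by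
  rw [← card_descentSet, ← card_range (n - 1)]
  exact card_le_card fun i hi => mem_range.mpr (by have := (mem_descentSet.mp hi).1; omega)

noncomputable def insertMax (τ : Perm (Fin m)) (p : Fin (m + 1)) : Perm (Fin (m + 1)) :=
  .ofBijective (p.insertNth (Fin.last m) (Fin.castSucc ∘ τ)) <|
    Finite.injective_iff_bijective.mp <|
    Fin.insertNth_injective ((Fin.castSucc_injective m).comp τ.injective)
      (by rintro ⟨i, hi⟩; exact (Fin.castSucc_lt_last _).ne hi)

@[simp]
theorem insertMax_apply_self (τ : Perm (Fin m)) (p : Fin (m + 1)) :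
    insertMax τ p p = Fin.last m := by
  simp [insertMax]

@[simp]
theorem insertMax_apply_succAbove (τ : Perm (Fin m)) (p : Fin (m + 1)) (j : Fin m) :
    insertMax τ p (p.succAbove j) = (τ j).castSucc := by
  simp [insertMax]

theorem insertMax_symm_last (τ : Perm (Fin m)) (p : Fin (m + 1)) :
    (insertMax τ p).symm (Fin.last m) = p := by
  simp [Equiv.symm_apply_eq]

theorem insertMax_bijective (m : ℕ) :
    Bijective fun x : Perm (Fin m) × Fin (m + 1) => insertMax x.1 x.2 := by
  refine (Fintype.bijective_iff_injective_and_card _).mpr ⟨?_, ?_⟩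
  · rintro ⟨τ, p⟩ ⟨τ', p'⟩ h
    obtain rfl : p = p' := by
      simpa only [insertMax_symm_last] using congrArg (fun σ => σ.symm (Fin.last m)) h
    refine Prod.ext (Equiv.ext fun j => ?_) rfl
    simpa using congrArg (· (p.succAbove j)) h
  · simp [Fintype.card_perm, Nat.factorial_succ, mul_comm]

theorem oneLine_insertMax (τ : Perm (Fin m)) (p : Fin (m + 1)) (i : ℕ) :
    oneLine (insertMax τ p) i =
      if i < p then oneLine τ i else if i = p then m else oneLine τ (i - 1) := by
  by_cases hi : i < m + 1
  · obtain hp | ⟨j, hj⟩ := Fin.eq_self_or_eq_succAbove p ⟨i, hi⟩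
    · simp [oneLine, hi, hp, ← Fin.val_inj.mpr hp]
    · have hw : oneLine (insertMax τ p) i = τ j := by simp [oneLine, hi, hj]
      have hij := congrArg Fin.val hj
      unfold Fin.succAbove at hij
      split_ifs at hij with h <;>
        simp only [Fin.lt_def, Fin.val_castSucc, Fin.val_succ] at h hij <;> subst hij
      · rw [hw, if_pos h]
        simp [oneLine]
      · rw [hw, if_neg (by omega), if_neg (by omega)]
        simp [oneLine]
  · simp [oneLine, hi, show ¬ i < p by omega, show i ≠ p by omega, show ¬ i - 1 < m by omega]

theorem mem_descentSet_insertMax (τ : Perm (Fin m)) (p : Fin (m + 1)) (i : ℕ) :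
    i ∈ descentSet (insertMax τ p) ↔
      (i + 1 < p ∧ i ∈ descentSet τ) ∨ (i = p ∧ (p : ℕ) < m) ∨
        (p < i ∧ i - 1 ∈ descentSet τ) := by
  have hp := p.isLt
  have hlt := fun k (hk : k < m) => oneLine_lt τ hk
  simp only [mem_descentSet, oneLine_insertMax, Nat.add_sub_cancel]
  grind

/-- Slot `q ≤ m` of `τ` is the gap before position `q`. Inserting the maximum into it creates
no new descent exactly when it is the end of the word or a descent gap. -/
def goodSlots (τ : Perm (Fin m)) : Finset ℕ := insert m ((descentSet τ).image (· + 1))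

theorem card_goodSlots (τ : Perm (Fin m)) : #(goodSlots τ) = descents τ + 1 := by
  rw [goodSlots, card_insert_of_notMem, card_image_of_injective _ (add_left_injective 1),
    card_descentSet]
  simp only [mem_image, not_exists, not_and]
  intro j hj
  have := (mem_descentSet.mp hj).1
  omega

theorem goodSlots_subset_range (τ : Perm (Fin m)) : goodSlots τ ⊆ range (m + 1) := by
  intro q hq
  simp only [goodSlots, mem_insert, mem_image] at hq
  rcases hq with rfl | ⟨j, hj, rfl⟩
  · simp
  · have := (mem_descentSet.mp hj).1
    simp only [mem_range]
    omega

theorem descentSet_insertMax (τ : Perm (Fin m)) (p : Fin (m + 1)) :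
    descentSet (insertMax τ p) =
      (descentSet τ).image (fun j => if j + 1 < (p : ℕ) then j else j + 1) ∪
        if (p : ℕ) ∈ goodSlots τ then ∅ else {(p : ℕ)} := by
  ext i
  simp only [mem_descentSet_insertMax, mem_union, mem_image, goodSlots, mem_insert]
  have hp := p.isLt
  constructor
  · rintro (⟨h, hi⟩ | ⟨rfl, h⟩ | ⟨h, hi⟩)
    · exact .inl ⟨i, hi, if_pos h⟩
    · split_ifs with hg
      · obtain ⟨j, hj, hjp⟩ := hg.resolve_left h.ne
        exact .inl ⟨j, hj, by simp [hjp]⟩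
      · exact .inr (mem_singleton_self _)
    · exact .inl ⟨i - 1, hi, by rw [if_neg (by omega)]; omega⟩
  · rintro (⟨j, hj, rfl⟩ | hi)
    · have := (mem_descentSet.mp hj).1
      split_ifs with h
      · exact .inl ⟨h, hj⟩
      · obtain h' | h' := (not_lt.mp h).eq_or_lt
        · exact .inr (.inl ⟨h'.symm, by omega⟩)
        · exact .inr (.inr ⟨h', by simpa using hj⟩)
    · split_ifs at hi with hg
      · simp at hi
      · rw [mem_singleton.mp hi]
        exact .inr (.inl ⟨rfl, by omega⟩)

theorem descents_insertMax (τ : Perm (Fin m)) (p : Fin (m + 1)) :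
    descents (insertMax τ p) = descents τ + if (p : ℕ) ∈ goodSlots τ then 0 else 1 := by
  have hinj : Injective fun j : ℕ => if j + 1 < (p : ℕ) then j else j + 1 := fun a b h => by
    simp only at h
    split_ifs at h <;> omega
  have hgood : ∀ j ∈ descentSet τ, (if j + 1 < (p : ℕ) then j else j + 1) = p →
      (p : ℕ) ∈ goodSlots τ := fun j hj h => by
    refine mem_insert_of_mem (mem_image.mpr ⟨j, hj, ?_⟩)
    split_ifs at h <;> omega
  rw [← card_descentSet, descentSet_insertMax, card_union_of_disjoint,
    card_image_of_injective _ hinj, card_descentSet]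
  · split_ifs <;> simp
  · split_ifs with hg
    · exact disjoint_empty_right _
    · simpa using fun j hj h => hg (hgood j hj h)

theorem sum_pow_descents_insertMax {S : Type*} [Semiring S] (x : S) (τ : Perm (Fin m)) :
    ∑ p : Fin (m + 1), x ^ descents (insertMax τ p) =
      (descents τ + 1) • x ^ descents τ + (m - descents τ) • x ^ (descents τ + 1) := by
  have hgood : #((range (m + 1)).filter (· ∈ goodSlots τ)) = descents τ + 1 := by
    rw [filter_mem_eq_inter, inter_eq_right.mpr (goodSlots_subset_range τ), card_goodSlots]
  have hbad : #((range (m + 1)).filter (· ∉ goodSlots τ)) = m - descents τ := by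
    have := card_filter_add_card_filter_not (s := range (m + 1)) (· ∈ goodSlots τ)
    rw [hgood, card_range] at this
    omega
  simp only [descents_insertMax, pow_add, pow_ite, pow_zero, mul_ite, mul_one]
  rw [Fin.sum_univ_eq_sum_range
      (fun q => if q ∈ goodSlots τ then x ^ descents τ else x ^ descents τ * x ^ 1),
    sum_ite, sum_const, sum_const, hgood, hbad, pow_one]

end Descents

open PowerSeries

section CommSemiring

variable (R : Type*) [CommSemiring R]

/-- `∑_{σ ∈ S_n} X ^ des σ`, the Eulerian polynomial `A_n` divided by `X`. -/
noncomputable def descentPoly (n : ℕ) : R⟦X⟧ := ∑ σ : Perm (Fin n), X ^ descents σ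

theorem descentPoly_zero : descentPoly R 0 = 1 := by
  have : descents (1 : Perm (Fin 0)) = 0 := Nat.le_zero.mp (descents_le 1)
  simp [descentPoly, this]

theorem descentPoly_eq_sum_eulerian {n : ℕ} (hn : 1 ≤ n) :
    descentPoly R n = ∑ k ∈ Icc 1 n, C (eulerian n k : R) * X ^ (k - 1) := by
  rw [descentPoly, ← sum_fiberwise_of_maps_to (g := fun σ => descents σ + 1) (t := Icc 1 n)
    fun σ _ => by have := descents_le σ; simp only [mem_Icc]; omega]
  refine sum_congr rfl fun k hk => ?_
  rw [sum_congr rfl fun σ hσ => show (X : R⟦X⟧) ^ descents σ = X ^ (k - 1) by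
      rw [← (mem_filter.mp hσ).2, Nat.add_sub_cancel], sum_const,
    eulerian, if_neg (by simp at hk; omega), Nat.card_eq_fintype_card, Fintype.card_subtype,
    map_natCast, nsmul_eq_mul]

theorem X_mul_derivative_X_pow (d : ℕ) : X * d⁄dX R (X ^ d) = (d : R⟦X⟧) * X ^ d := by
  rw [derivative_pow, derivative_X, mul_one, mul_left_comm]
  rcases d with _ | d
  · simp
  · rw [Nat.add_sub_cancel, ← pow_succ']

theorem X_mul_derivative_mk (f : ℕ → R) :
    X * d⁄dX R (mk f) = PowerSeries.mk fun i => i * f i := by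
  ext i
  rcases i with _ | i
  · simp
  · simp [coeff_succ_X_mul, coeff_derivative, mul_comm]

end CommSemiring

section CommRing

variable (R : Type*) [CommRing R]

theorem descentPoly_succ (m : ℕ) :
    descentPoly R (m + 1) =
      (1 + (m : R⟦X⟧) * X) * descentPoly R m + X * (1 - X) * d⁄dX R (descentPoly R m) := by
  rw [descentPoly, ← (insertMax_bijective m).sum_comp, Fintype.sum_prod_type]
  simp only [sum_pow_descents_insertMax, descentPoly, map_sum, mul_sum, ← sum_add_distrib]
  refine sum_congr rfl fun τ _ => ?_
  have hd : descents τ ≤ m := (descents_le τ).trans (Nat.sub_le m 1)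
  rw [mul_comm X, mul_assoc, X_mul_derivative_X_pow, nsmul_eq_mul, nsmul_eq_mul, Nat.cast_sub hd]
  push_cast
  ring

theorem one_sub_X_pow_mul_mk_pow (n : ℕ) :
    (1 - X : R⟦X⟧) ^ (n + 1) * mk (fun i : ℕ => ((i : R) + 1) ^ n) = descentPoly R n := by
  induction n with
  | zero =>
    simp only [zero_add, pow_one, pow_zero, descentPoly_zero]
    exact (mul_comm _ _).trans (mk_one_mul_one_sub_eq_one R)
  | succ n ih =>
    set F := mk fun i : ℕ => ((i : R) + 1) ^ n
    have hF : mk (fun i : ℕ => ((i : R) + 1) ^ (n + 1)) = F + X * d⁄dX R F := by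
      rw [X_mul_derivative_mk]
      ext i
      simp only [F, map_add, coeff_mk]
      ring
    have hD := congrArg (d⁄dX R) ih
    rw [Derivation.leibniz, derivative_pow, map_sub, derivative_X, Derivation.map_one_eq_zero] at hD
    simp only [smul_eq_mul, Nat.add_sub_cancel] at hD
    rw [hF, descentPoly_succ, ← hD, ← ih]
    push_cast
    ring

end CommRing

/-- For `n ≥ 1`, `(1−t)^{n+1} · Σ_{i≥0} (i+1)^n t^i = A_{n,1} + A_{n,2} t + ⋯ + A_{n,n} t^{n−1}`,
i.e. `Σ_{i≥0} (i+1)^n t^i = A_n(t)/(t·(1−t)^{n+1})` where `A_n` is the `n`-th Eulerian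
polynomial. -/
theorem stmt8 (n : ℕ) (hn : 1 ≤ n) :
    (1 - PowerSeries.X : PowerSeries ℚ) ^ (n + 1)
        * PowerSeries.mk (fun i => ((i + 1) ^ n : ℚ))
      = ∑ k ∈ Finset.Icc 1 n, PowerSeries.C (R := ℚ) (eulerian n k) * PowerSeries.X ^ (k - 1) := by
  rw [one_sub_X_pow_mul_mk_pow, descentPoly_eq_sum_eulerian ℚ hn]
end

section
/- For n ≥ 1, the monoid of exponent vectors of the toric algebra A_n = K[a_{g_1}^{(1)}⋯a_{g_n}^{(n)} a_{g_1+⋯+g_n}^{(n+1)} : g_i ∈ Z/2] has degree-2 part of cardinality (3/2)·3^n − 2^n + 1/2; i.e., the number of multisets of size 2 of elements of (Z/2)^n, counted up to the coordinatewise-unordered-pair equivalence that also identifies the pair of parity sums, is (3^{n+1} − 2^{n+1} + 1)/2. -/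
open Finset

/-!
The class of `(g, h)` is recorded by `f = ({gᵢ, hᵢ})ᵢ` and `z = {∑ g, ∑ h}`. Over a given `f`,
the attainable `z` are exactly those with `z.sum = ∑ᵢ (fᵢ).sum`, unless every `fᵢ` is diagonal,
in which case `g = h` and `z` are determined: at an off-diagonal coordinate, swapping `gᵢ` and
`hᵢ` changes both sums by `1`. So `f` carries two classes if it has an off-diagonal entry and
`∑ᵢ (fᵢ).sum = 0`, and one otherwise, which gives `3ⁿ - 2ⁿ + #{f | ∑ᵢ (fᵢ).sum = 0}` classes.
The last number is `(3ⁿ + 1) / 2` by a character sum: the three elements of `Sym2 (ZMod 2)` have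
sums `0, 0, 1`.
-/

namespace AddChar

variable {A M ι : Type*} [AddCommMonoid A] [CommMonoid M]

theorem map_sum_eq_prod (ψ : AddChar A M) (s : Finset ι) (f : ι → A) :
    ψ (∑ i ∈ s, f i) = ∏ i ∈ s, ψ (f i) := by
  classical
  induction s using Finset.cons_induction with
  | empty => simp
  | cons a s ha ih => rw [sum_cons, prod_cons, map_add_eq_mul, ih]

end AddChar

namespace ZMod

def signChar : AddChar (ZMod 2) ℤ where
  toFun a := if a = 0 then 1 else -1
  map_zero_eq_one' := rfl
  map_add_eq_mul' := by decide

theorem signChar_apply (a : ZMod 2) : signChar a = if a = 0 then 1 else -1 := rfl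

theorem two_mul_card_filter_sum_eq_zero {ι β : Type*} [Fintype ι] [DecidableEq ι] [Fintype β]
    (φ : β → ZMod 2) :
    (2 * #{f : ι → β | ∑ i, φ (f i) = 0} : ℤ) =
      Fintype.card β ^ Fintype.card ι + (∑ b, signChar (φ b)) ^ Fintype.card ι := by
  have hchar : ∑ f : ι → β, signChar (∑ i, φ (f i)) = (∑ b, signChar (φ b)) ^ Fintype.card ι := by
    simp_rw [AddChar.map_sum_eq_prod, ← Fintype.prod_sum (fun (_ : ι) b => signChar (φ b)),
      prod_const, card_univ]
  rw [← hchar]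
  have htotal := card_filter_add_card_filter_not (s := (univ : Finset (ι → β)))
    (fun f => ∑ i, φ (f i) = 0)
  rw [card_univ, Fintype.card_fun] at htotal
  simp only [signChar_apply, sum_ite, sum_const, nsmul_eq_mul, mul_one, mul_neg]
  rw [← Nat.cast_pow, ← htotal]
  push_cast
  ring

end ZMod

namespace Sym2

def sum {α : Type*} [AddCommMagma α] : Sym2 α → α := lift ⟨(· + ·), add_comm⟩

@[simp]
theorem sum_mk {α : Type*} [AddCommMagma α] (a b : α) : s(a, b).sum = a + b := rfl

theorem sum_eq_zero_iff_isDiag (z : Sym2 (ZMod 2)) : z.sum = 0 ↔ z.IsDiag := by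
  revert z; decide

theorem eq_or_eq_of_sum_eq {z : Sym2 (ZMod 2)} {a b : ZMod 2} (h : z.sum = a + b) :
    z = s(a, b) ∨ z = s(a + 1, b + 1) := by
  revert z a b; decide

theorem mk_add_one_add_one {a b : ZMod 2} (h : a ≠ b) : s(a + 1, b + 1) = s(a, b) := by
  revert a b; decide

theorem card_filter_sum_eq (c : ZMod 2) :
    #{z : Sym2 (ZMod 2) | z.sum = c} = if c = 0 then 2 else 1 := by
  revert c; decide

theorem card_zmod_two : Fintype.card (Sym2 (ZMod 2)) = 3 := rfl

theorem card_filter_isDiag_zmod_two : #{z : Sym2 (ZMod 2) | z.IsDiag} = 2 := by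
  decide

theorem sum_signChar_sum : ∑ z : Sym2 (ZMod 2), ZMod.signChar z.sum = 1 := by
  decide

end Sym2

section PairClass

variable {ι α : Type*} [Fintype ι]

def pairClass [AddCommMonoid α] (p : (ι → α) × (ι → α)) : (ι → Sym2 α) × Sym2 α :=
  (fun i => s(p.1 i, p.2 i), s(∑ i, p.1 i, ∑ i, p.2 i))

theorem sum_snd_pairClass [AddCommMonoid α] (p : (ι → α) × (ι → α)) :
    (pairClass p).2.sum = ∑ i, ((pairClass p).1 i).sum := by
  simp [pairClass, sum_add_distrib]

theorem diag_mem_range_pairClass_iff [AddCommMonoid α] (x : ι → α) (z : Sym2 α) :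
    ((fun i => Sym2.diag (x i)), z) ∈ Set.range pairClass ↔ z = Sym2.diag (∑ i, x i) := by
  constructor
  · rintro ⟨⟨g, h⟩, hp⟩
    simp only [pairClass, Prod.mk.injEq, funext_iff, Sym2.diag, Sym2.eq_iff] at hp
    obtain ⟨hgh, rfl⟩ := hp
    have hg : g = x := funext fun i => by grind
    have hh : h = x := funext fun i => by grind
    rw [hg, hh]; rfl
  · rintro rfl
    exact ⟨(x, x), rfl⟩

theorem mem_range_pairClass_of_not_isDiag [DecidableEq ι] {f : ι → Sym2 (ZMod 2)}
    {z : Sym2 (ZMod 2)} {i₀ : ι} (hi₀ : ¬ (f i₀).IsDiag) (hz : z.sum = ∑ i, (f i).sum) :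
    (f, z) ∈ Set.range pairClass := by
  have hrep : ∀ i, ∃ a b, s(a, b) = f i := fun i => Sym2.ind (fun a b => ⟨a, b, rfl⟩) (f i)
  choose g h hgh using hrep
  obtain rfl : f = fun i => s(g i, h i) := funext fun i => (hgh i).symm
  have hz' : z.sum = ∑ i, g i + ∑ i, h i := by simpa [sum_add_distrib] using hz
  rcases Sym2.eq_or_eq_of_sum_eq hz' with rfl | rfl
  · exact ⟨(g, h), rfl⟩
  · -- adding `1` to both entries at `i₀` swaps them there and adds `1` to both sums
    have hne : g i₀ ≠ h i₀ := mt Sym2.mk_isDiag_iff.mpr hi₀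
    refine ⟨(g + Pi.single i₀ 1, h + Pi.single i₀ 1), ?_⟩
    simp only [pairClass, Prod.mk.injEq]
    refine ⟨funext fun i => ?_, by simp [sum_add_distrib]⟩
    rcases eq_or_ne i i₀ with rfl | hi
    · simpa using Sym2.mk_add_one_add_one hne
    · simp [hi]

end PairClass

section Counting

variable {ι : Type*} [Fintype ι] [DecidableEq ι]

theorem card_fiber_pairClass (f : ι → Sym2 (ZMod 2)) :
    #{z | (f, z) ∈ univ.image (pairClass (ι := ι))} =
      if (∃ i, ¬ (f i).IsDiag) ∧ ∑ i, (f i).sum = 0 then 2 else 1 := by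
  simp only [mem_image_univ_iff_mem_range]
  by_cases hoff : ∃ i, ¬ (f i).IsDiag
  · obtain ⟨i₀, hi₀⟩ := hoff
    have hfiber : ∀ z, (f, z) ∈ Set.range pairClass ↔ z.sum = ∑ i, (f i).sum := fun z =>
      ⟨fun ⟨p, hp⟩ => by simpa [hp] using sum_snd_pairClass p,
        mem_range_pairClass_of_not_isDiag hi₀⟩
    simp only [hfiber, Sym2.card_filter_sum_eq, show ∃ i, ¬ (f i).IsDiag from ⟨i₀, hi₀⟩,
      true_and]
  · obtain ⟨x, rfl⟩ : ∃ x : ι → ZMod 2, f = fun i => Sym2.diag (x i) :=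
      ⟨fun i => (f i).diagElem (not_exists_not.mp hoff i),
        funext fun i => (Sym2.diag_diagElem _).symm⟩
    simp only [diag_mem_range_pairClass_iff, filter_eq', mem_univ, if_true, card_singleton]
    simp [Sym2.diag_isDiag]

theorem card_filter_forall_isDiag :
    #{f : ι → Sym2 (ZMod 2) | ∀ i, (f i).IsDiag} = 2 ^ Fintype.card ι := by
  have hpi : ({f : ι → Sym2 (ZMod 2) | ∀ i, (f i).IsDiag} : Finset _) =
      Fintype.piFinset fun _ => {z : Sym2 (ZMod 2) | z.IsDiag} := by
    ext f
    simp [Fintype.mem_piFinset]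
  rw [hpi, Fintype.card_piFinset, prod_const, card_univ, Sym2.card_filter_isDiag_zmod_two]

theorem card_image_pairClass :
    #(univ.image (pairClass (ι := ι) (α := ZMod 2))) + 2 ^ Fintype.card ι =
      3 ^ Fintype.card ι + #{f : ι → Sym2 (ZMod 2) | ∑ i, (f i).sum = 0} := by
  set S := univ.image (pairClass (ι := ι) (α := ZMod 2))
  have hfibers : #S = ∑ f, #{z | (f, z) ∈ S} := by
    rw [← filter_univ_mem S, card_filter, Fintype.sum_prod_type]
    simp only [filter_univ_mem, card_filter]
  have hsplit : ∀ f : ι → Sym2 (ZMod 2),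
      #{z | (f, z) ∈ S} + (if ∀ i, (f i).IsDiag then 1 else 0) =
        1 + if ∑ i, (f i).sum = 0 then 1 else 0 := by
    intro f
    rw [card_fiber_pairClass]
    by_cases hd : ∀ i, (f i).IsDiag
    · have hc : ∑ i, (f i).sum = 0 :=
        sum_eq_zero fun i _ => (Sym2.sum_eq_zero_iff_isDiag _).2 (hd i)
      simp [hd, hc]
    · by_cases hc : ∑ i, (f i).sum = 0 <;> simp [hd, not_forall.mp hd, hc]
  rw [hfibers, ← card_filter_forall_isDiag, card_filter, card_filter, ← sum_add_distrib,
    Finset.sum_congr rfl fun f _ => hsplit f, sum_add_distrib]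
  simp [Sym2.card_zmod_two]

end Counting

theorem stmt17_general (n : ℕ) :
    2 * countM n = 3 ^ (n + 1) - 2 ^ (n + 1) + 1 ∧
    (countM n : ℚ) = (3 / 2) * 3 ^ n - 2 ^ n + 1 / 2 := by
  have himage :
      countM n + 2 ^ n = 3 ^ n + #{f : Fin n → Sym2 (ZMod 2) | ∑ i, (f i).sum = 0} := by
    have h := card_image_pairClass (ι := Fin n)
    rw [Fintype.card_fin] at h
    exact h
  have heven := ZMod.two_mul_card_filter_sum_eq_zero (ι := Fin n) Sym2.sum
  rw [Sym2.sum_signChar_sum, one_pow, Sym2.card_zmod_two, Fintype.card_fin] at heven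
  have hcount : 2 * countM n + 2 ^ (n + 1) = 3 ^ (n + 1) + 1 := by
    zify at himage ⊢
    rw [pow_succ, pow_succ]
    linear_combination 2 * himage + heven
  have hle : 2 ^ (n + 1) ≤ 3 ^ (n + 1) := Nat.pow_le_pow_left (by norm_num) _
  refine ⟨by omega, ?_⟩
  have hq : (2 * countM n + 2 ^ (n + 1) : ℚ) = 3 ^ (n + 1) + 1 := by exact_mod_cast hcount
  rw [pow_succ, pow_succ] at hq
  linarith

/-- For `n ≥ 1`, the degree-2 part of the monoid of exponent vectors of `A_n` has cardinality
`(3^{n+1} − 2^{n+1} + 1)/2 = (3/2)·3^n − 2^n + 1/2`. -/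
theorem stmt17 (n : ℕ) (hn : 1 ≤ n) :
    2 * countM n = 3 ^ (n + 1) - 2 ^ (n + 1) + 1 ∧
    (countM n : ℚ) = (3 / 2) * 3 ^ n - 2 ^ n + 1 / 2 :=
  stmt17_general n
end
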